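/- arXiv:2110.07853 — 2 statements merged into one kernel-verified Lean document; each statement's English description precedes it below -/
import Mathlib

section
/- Let 𝒞, 𝒟, ℰ be categories, ⊗ : 𝒞 × 𝒟 → ℰ a functor preserving colimits in each variable, with adjoint hom functor Hom : 𝒟^op × ℰ → 𝒞 so that (− ⊗ d) ⊣ Hom(d, −) naturally. Given morphisms f : K → X in 𝒞, g : L → Y in 𝒟, and h : M → Z in ℰ, the pushout-product f □ g has the left lifting property against h if and only if f has the left lifting property against the pullback-hom Hom_□(g, h) : Hom(Y, M) → Hom(L, M) ×_{Hom(L, Z)} Hom(Y, Z). -/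
open CategoryTheory CategoryTheory.Limits Opposite

/-- Pushout-product / pullback-hom lifting adjunction: for a two-variable
functor `T = ⊗` preserving colimits in each variable, with natural adjoint hom
functor `Hm`, the pushout-product `f □ g` has the left lifting property against
`h` iff `f` has the left lifting property against the pullback-hom
`Hom_□(g, h)`. -/
theorem pushoutProduct_llp_iff_pullbackHom_llp
    {C D E : Type*} [Category C] [Category D] [Category E]
    (T : C ⥤ D ⥤ E) (Hm : Dᵒᵖ ⥤ E ⥤ C)
    [∀ c : C, PreservesColimits (T.obj c)]
    [∀ d : D, PreservesColimits (T.flip.obj d)]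
    (adj : ∀ d : D, T.flip.obj d ⊣ Hm.obj (op d))
    (hnat : ∀ {c : C} {d d' : D} {e : E} (k : d ⟶ d')
      (u : (T.obj c).obj d' ⟶ e),
      ((adj d).homEquiv c e) ((T.obj c).map k ≫ u) =
        ((adj d').homEquiv c e) u ≫ (Hm.map k.op).app e)
    {K X : C} {L Y : D} {M Z : E} (f : K ⟶ X) (g : L ⟶ Y) (h : M ⟶ Z)
    [HasPushout ((T.obj K).map g) ((T.map f).app L)]
    [HasPullback ((Hm.obj (op L)).map h) ((Hm.map g.op).app Z)] :
    HasLiftingProperty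
        (pushout.desc ((T.map f).app Y) ((T.obj X).map g) ((T.map f).naturality g))
        h ↔
      HasLiftingProperty f
        (pullback.lift ((Hm.map g.op).app M) ((Hm.obj (op Y)).map h)
          ((Hm.map g.op).naturality h).symm) := by
  -- naturality of the adjunction hom-equivalence in the first variable,
  -- phrased with `(T.map w).app d` (definitionally `(T.flip.obj d).map w`)
  have natL : ∀ {c c' : C} (w : c ⟶ c') (d : D) {e : E}
      (u : (T.obj c').obj d ⟶ e),
      ((adj d).homEquiv c e) ((T.map w).app d ≫ u) =
        w ≫ ((adj d).homEquiv c' e) u := @fun c c' w d e u =>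
    (adj d).homEquiv_naturality_left w u
  have natR : ∀ {c : C} (d : D) {e e' : E} (u : (T.obj c).obj d ⟶ e)
      (w : e ⟶ e'),
      ((adj d).homEquiv c e') (u ≫ w) =
        ((adj d).homEquiv c e) u ≫ (Hm.obj (op d)).map w := @fun c d e e' u w =>
    (adj d).homEquiv_naturality_right u w
  constructor
  · intro hlp
    constructor
    intro a b sq
    have hpo : (T.obj K).map g ≫ ((adj Y).homEquiv K M).symm a =
        (T.map f).app L ≫
          ((adj L).homEquiv X M).symm (b ≫ pullback.fst _ _) := by
      apply ((adj L).homEquiv K M).injective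
      rw [hnat g, natL f L, Equiv.apply_symm_apply, Equiv.apply_symm_apply]
      have := sq.w =≫ pullback.fst _ _
      simpa only [Category.assoc, pullback.lift_fst] using this
    have hsq : CommSq
        (pushout.desc (((adj Y).homEquiv K M).symm a)
          (((adj L).homEquiv X M).symm (b ≫ pullback.fst _ _)) hpo)
        (pushout.desc ((T.map f).app Y) ((T.obj X).map g)
          ((T.map f).naturality g))
        h (((adj Y).homEquiv X Z).symm (b ≫ pullback.snd _ _)) := by
      constructor
      apply pushout.hom_ext
      · simp only [pushout.inl_desc_assoc, pushout.inl_desc]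
        apply ((adj Y).homEquiv K Z).injective
        rw [natR, natL, Equiv.apply_symm_apply, Equiv.apply_symm_apply]
        have := sq.w =≫ pullback.snd _ _
        simpa only [Category.assoc, pullback.lift_snd] using this
      · simp only [pushout.inr_desc_assoc, pushout.inr_desc]
        apply ((adj L).homEquiv X Z).injective
        rw [natR, hnat g, Equiv.apply_symm_apply, Equiv.apply_symm_apply,
          Category.assoc, Category.assoc, pullback.condition]
    obtain ⟨⟨lift⟩⟩ := hlp.sq_hasLift hsq
    have h1 : (T.map f).app Y ≫ lift.l = ((adj Y).homEquiv K M).symm a := by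
      have := pushout.inl _ _ ≫= lift.fac_left
      simpa only [pushout.inl_desc_assoc, pushout.inl_desc] using this
    have h2 : (T.obj X).map g ≫ lift.l =
        ((adj L).homEquiv X M).symm (b ≫ pullback.fst _ _) := by
      have := pushout.inr _ _ ≫= lift.fac_left
      simpa only [pushout.inr_desc_assoc, pushout.inr_desc] using this
    refine ⟨⟨⟨(adj Y).homEquiv X M lift.l, ?_, ?_⟩⟩⟩
    · rw [← natL f Y lift.l, h1, Equiv.apply_symm_apply]
    · apply pullback.hom_ext
      · simp only [Category.assoc, pullback.lift_fst]
        rw [← hnat g lift.l, h2, Equiv.apply_symm_apply]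
      · simp only [Category.assoc, pullback.lift_snd]
        rw [← natR Y lift.l h, lift.fac_right, Equiv.apply_symm_apply]
  · intro hlp
    constructor
    intro u v sq
    have e0 : (pushout.inl _ _ ≫ u) ≫ h = (T.map f).app Y ≫ v := by
      have := pushout.inl _ _ ≫= sq.w
      simpa only [Category.assoc, pushout.inl_desc_assoc] using this
    have e1 : (pushout.inr _ _ ≫ u) ≫ h = (T.obj X).map g ≫ v := by
      have := pushout.inr _ _ ≫= sq.w
      simpa only [Category.assoc, pushout.inr_desc_assoc] using this
    have hpb : ((adj L).homEquiv X M) (pushout.inr _ _ ≫ u) ≫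
          (Hm.obj (op L)).map h =
        ((adj Y).homEquiv X Z) v ≫ (Hm.map g.op).app Z := by
      rw [← natR, e1, hnat g v]
    have hsq : CommSq ((adj Y).homEquiv K M (pushout.inl _ _ ≫ u)) f
        (pullback.lift ((Hm.map g.op).app M) ((Hm.obj (op Y)).map h)
          ((Hm.map g.op).naturality h).symm)
        (pullback.lift ((adj L).homEquiv X M (pushout.inr _ _ ≫ u))
          ((adj Y).homEquiv X Z v) hpb) := by
      constructor
      apply pullback.hom_ext
      · simp only [Category.assoc, pullback.lift_fst]
        rw [← hnat g, ← Category.assoc, pushout.condition, Category.assoc,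
          natL f L]
      · simp only [Category.assoc, pullback.lift_snd]
        rw [← natR, e0, natL f Y]
    obtain ⟨⟨lift⟩⟩ := hlp.sq_hasLift hsq
    have h1 : lift.l ≫ (Hm.map g.op).app M =
        (adj L).homEquiv X M (pushout.inr _ _ ≫ u) := by
      have := lift.fac_right =≫ pullback.fst _ _
      simpa only [Category.assoc, pullback.lift_fst] using this
    have h2 : lift.l ≫ (Hm.obj (op Y)).map h = (adj Y).homEquiv X Z v := by
      have := lift.fac_right =≫ pullback.snd _ _
      simpa only [Category.assoc, pullback.lift_snd] using this
    refine ⟨⟨⟨((adj Y).homEquiv X M).symm lift.l, ?_, ?_⟩⟩⟩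
    · apply pushout.hom_ext
      · simp only [pushout.inl_desc_assoc]
        apply ((adj Y).homEquiv K M).injective
        rw [natL f Y, Equiv.apply_symm_apply, lift.fac_left]
      · simp only [pushout.inr_desc_assoc]
        apply ((adj L).homEquiv X M).injective
        rw [hnat g, Equiv.apply_symm_apply, h1]
    · apply ((adj Y).homEquiv X Z).injective
      rw [natR, Equiv.apply_symm_apply, h2]
end

section
/- The pushout-product of the boundary inclusions s₀ : S⁰ → D¹ and s_{n-1} : S^{n-1} → Dⁿ is homeomorphic (as a map, i.e., via homeomorphisms of domain and codomain commuting with the maps) to the boundary inclusion s_n : Sⁿ → D^{n+1}. -/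
open Metric

section Radial

variable {E F : Type*} [NormedAddCommGroup E] [NormedSpace ℝ E]
  [NormedAddCommGroup F] [NormedSpace ℝ F]

/-- Radial rescaling along a continuous linear equivalence: a norm-preserving
homeomorphism candidate. -/
noncomputable def radialMap (e : E ≃L[ℝ] F) (x : E) : F :=
  (‖x‖ / ‖e x‖) • e x

lemma norm_radialMap (e : E ≃L[ℝ] F) (x : E) : ‖radialMap e x‖ = ‖x‖ := by
  rcases eq_or_ne x 0 with rfl | hx
  · simp [radialMap]
  · have he : e x ≠ 0 := by simpa using hx
    have hne : ‖e x‖ ≠ 0 := norm_ne_zero_iff.mpr he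
    rw [radialMap, norm_smul, Real.norm_eq_abs, abs_div, abs_norm, abs_norm,
      div_mul_cancel₀ _ hne]

lemma radialMap_symm_radialMap (e : E ≃L[ℝ] F) (x : E) :
    radialMap e.symm (radialMap e x) = x := by
  rcases eq_or_ne x 0 with rfl | hx
  · simp [radialMap]
  · have he : e x ≠ 0 := by simpa using hx
    have hne : ‖e x‖ ≠ 0 := norm_ne_zero_iff.mpr he
    have hnx : ‖x‖ ≠ 0 := norm_ne_zero_iff.mpr hx
    have hc : (0:ℝ) < ‖x‖ / ‖e x‖ :=
      div_pos (norm_pos_iff.mpr hx) (norm_pos_iff.mpr he)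
    rw [radialMap, norm_radialMap, radialMap, map_smul,
      ContinuousLinearEquiv.symm_apply_apply, norm_smul, Real.norm_eq_abs,
      abs_of_pos hc, smul_smul]
    rw [show (‖x‖ / (‖x‖ / ‖e x‖ * ‖x‖) * (‖x‖ / ‖e x‖)) = 1 from by
      field_simp, one_smul]

lemma continuous_radialMap (e : E ≃L[ℝ] F) : Continuous (radialMap e) := by
  rw [continuous_iff_continuousAt]
  intro x
  rcases eq_or_ne x 0 with rfl | hx
  · have h0 : radialMap e 0 = 0 := by simp [radialMap]
    rw [ContinuousAt, h0]
    exact squeeze_zero_norm (fun y => (norm_radialMap e y).le) tendsto_norm_zero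
  · have he : e x ≠ 0 := by simpa using hx
    have hne : ‖e x‖ ≠ 0 := norm_ne_zero_iff.mpr he
    exact ((continuousAt_id.norm.div
      (e.continuous.norm.continuousAt) hne).smul e.continuous.continuousAt)

/-- The radial homeomorphism associated to a continuous linear equivalence;
it satisfies `‖radialHomeomorph e x‖ = ‖x‖`. -/
noncomputable def radialHomeomorph (e : E ≃L[ℝ] F) : E ≃ₜ F where
  toFun := radialMap e
  invFun := radialMap e.symm
  left_inv := radialMap_symm_radialMap e
  right_inv := fun y => by
    simpa using radialMap_symm_radialMap e.symm y
  continuous_toFun := continuous_radialMap e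
  continuous_invFun := continuous_radialMap e.symm

end Radial

/-- The pushout-product of the boundary inclusions `S⁰ → D¹` and
`S^{n-1} → Dⁿ` is homeomorphic, as a map, to the boundary inclusion
`Sⁿ → D^{n+1}`: concretely, the inclusion
`(D¹ × S^{n-1}) ∪_{S⁰ × S^{n-1}} (S⁰ × Dⁿ) → D¹ × Dⁿ` is homeomorphic to
`Sⁿ → D^{n+1}`. -/
theorem pushoutProduct_boundary_inclusions (n : ℕ) (hn : 1 ≤ n) :
    ∃ (φ : {p : EuclideanSpace ℝ (Fin 1) × EuclideanSpace ℝ (Fin n) //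
            (‖p.1‖ ≤ 1 ∧ ‖p.2‖ = 1) ∨ (‖p.1‖ = 1 ∧ ‖p.2‖ ≤ 1)} ≃ₜ
          Metric.sphere (0 : EuclideanSpace ℝ (Fin (n + 1))) 1)
      (ψ : {p : EuclideanSpace ℝ (Fin 1) × EuclideanSpace ℝ (Fin n) //
            ‖p.1‖ ≤ 1 ∧ ‖p.2‖ ≤ 1} ≃ₜ
          Metric.closedBall (0 : EuclideanSpace ℝ (Fin (n + 1))) 1),
      ∀ x : {p : EuclideanSpace ℝ (Fin 1) × EuclideanSpace ℝ (Fin n) //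
            (‖p.1‖ ≤ 1 ∧ ‖p.2‖ = 1) ∨ (‖p.1‖ = 1 ∧ ‖p.2‖ ≤ 1)},
        (ψ ⟨x.1, x.2.elim (fun h => ⟨h.1, le_of_eq h.2⟩)
              (fun h => ⟨le_of_eq h.1, h.2⟩)⟩ : EuclideanSpace ℝ (Fin (n + 1))) =
          (φ x : EuclideanSpace ℝ (Fin (n + 1))) := by
  classical
  set P := EuclideanSpace ℝ (Fin 1) × EuclideanSpace ℝ (Fin n)
  set E := EuclideanSpace ℝ (Fin (n + 1))
  have hfr : Module.finrank ℝ P = Module.finrank ℝ E := by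
    simp only [P, E, Module.finrank_prod, finrank_euclideanSpace_fin]
    omega
  let e : P ≃L[ℝ] E := ContinuousLinearEquiv.ofFinrankEq hfr
  let H : P ≃ₜ E := radialHomeomorph e
  have hH : ∀ p : P, ‖H p‖ = ‖p‖ := fun p => norm_radialMap e p
  have hnorm : ∀ p : P, ‖p‖ = max ‖p.1‖ ‖p.2‖ := fun p => rfl
  -- sphere condition
  have hsph : ∀ p : P, ((‖p.1‖ ≤ 1 ∧ ‖p.2‖ = 1) ∨ (‖p.1‖ = 1 ∧ ‖p.2‖ ≤ 1)) ↔
      H p ∈ Metric.sphere (0 : E) 1 := by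
    intro p
    rw [mem_sphere_zero_iff_norm, hH, hnorm]
    constructor
    · rintro (⟨h1, h2⟩ | ⟨h1, h2⟩)
      · rw [max_eq_right (h2 ▸ h1), h2]
      · rw [max_eq_left (h1 ▸ h2), h1]
    · intro h
      rcases le_total ‖p.1‖ ‖p.2‖ with hle | hle
      · left; rw [max_eq_right hle] at h; exact ⟨h ▸ hle, h⟩
      · right; rw [max_eq_left hle] at h; exact ⟨h, h ▸ hle⟩
  have hball : ∀ p : P, (‖p.1‖ ≤ 1 ∧ ‖p.2‖ ≤ 1) ↔
      H p ∈ Metric.closedBall (0 : E) 1 := by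
    intro p
    rw [mem_closedBall_zero_iff, hH, hnorm, max_le_iff]
  refine ⟨H.subtype hsph, H.subtype hball, fun x => rfl⟩
end
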